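/- arXiv:2205.10562 — 3 statements merged into one kernel-verified Lean document; each statement's English description precedes it below -/
import Mathlib

section
/- For ρ_GHZ as above and α_i = Σ_A σ_i Σ_A, β_j = Σ_B σ_j Σ_B, γ_k = Σ_C σ_k Σ_C with Σ_A = diag(l,1), Σ_B = diag(m,1), Σ_C = diag(n,1), the coefficients D_{ijk} = Tr[ρ_GHZ (α_i⊗β_j⊗γ_k)] satisfy D_{111} = p l m n, D_{122} = D_{212} = D_{221} = −p l m n, D_{333} = ((l²−1)(m²n²+1))/4 + ((l²+1)(m²n²−1))/4 · p, and all other D_{ijk} = 0. -/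
open Matrix Kronecker ComplexOrder

noncomputable def pauli : Fin 3 → Matrix (Fin 2) (Fin 2) ℂ
  | 0 => !![0, 1; 1, 0]
  | 1 => !![0, -Complex.I; Complex.I, 0]
  | 2 => !![1, 0; 0, -1]

noncomputable def ghzVec : Fin 2 × Fin 2 × Fin 2 → ℂ := fun x =>
  if x = ((0, 0, 0) : Fin 2 × Fin 2 × Fin 2) ∨ x = ((1, 1, 1) : Fin 2 × Fin 2 × Fin 2)
  then ((Real.sqrt 2)⁻¹ : ℝ) else 0

/-- The projector |GHZ⟩⟨GHZ|. -/
noncomputable def ghzProj : Matrix (Fin 2 × Fin 2 × Fin 2) (Fin 2 × Fin 2 × Fin 2) ℂ :=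
  fun x y => ghzVec x * (starRingEnd ℂ) (ghzVec y)

/-- The 4×4 matrix diag(1,0,0,1). -/
noncomputable def Itilde : Matrix (Fin 2 × Fin 2) (Fin 2 × Fin 2) ℂ :=
  Matrix.diagonal (fun x => if x = ((0, 0) : Fin 2 × Fin 2) ∨ x = ((1, 1) : Fin 2 × Fin 2)
    then (1 : ℂ) else 0)

/-- The noisy GHZ state ρ_GHZ = p|GHZ⟩⟨GHZ| + ((1-p)/4) I₂ ⊗ diag(1,0,0,1). -/
noncomputable def rhoGHZ (p : ℝ) : Matrix (Fin 2 × Fin 2 × Fin 2) (Fin 2 × Fin 2 × Fin 2) ℂ :=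
  (p : ℂ) • ghzProj + (((1 - p) / 4 : ℝ) : ℂ) • ((1 : Matrix (Fin 2) (Fin 2) ℂ) ⊗ₖ Itilde)

/-- Filtered Pauli operators: `filt l i = diag(l,1) · σ_i · diag(l,1)`. -/
noncomputable def filt (l : ℝ) (i : Fin 3) : Matrix (Fin 2) (Fin 2) ℂ :=
  !![(l : ℂ), 0; 0, 1] * pauli i * !![(l : ℂ), 0; 0, 1]

/-!
In the computational basis, `Tr[ρ_GHZ (A ⊗ B ⊗ C)]` only sees the products `A_xy B_xy C_xy`
(`x, y ∈ {0, 1}`) from the GHZ projector and `Tr A · (B₀₀ C₀₀ + B₁₁ C₁₁)` from the noise term.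
The filtered `σ_x, σ_y` are off-diagonal and the filtered `σ_z` is diagonal, so every mixed triple
vanishes; among off-diagonal triples the phases `±i` of `σ_y` cancel unless `σ_y` occurs an even
number of times.
-/

theorem trace_ghzProj_mul (M : Matrix (Fin 2 × Fin 2 × Fin 2) (Fin 2 × Fin 2 × Fin 2) ℂ) :
    (ghzProj * M).trace =
      (M (0, 0, 0) (0, 0, 0) + M (0, 0, 0) (1, 1, 1) + M (1, 1, 1) (0, 0, 0)
        + M (1, 1, 1) (1, 1, 1)) / 2 := by
  have hsq : ((Real.sqrt 2)⁻¹ : ℂ) ^ 2 = 1 / 2 := by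
    rw [inv_pow, ← Complex.ofReal_pow, Real.sq_sqrt zero_le_two]; norm_num
  simp [trace, mul_apply, ghzProj, ghzVec, Fintype.sum_prod_type, Fin.sum_univ_two]
  linear_combination (M (0, 0, 0) (0, 0, 0) + M (0, 0, 0) (1, 1, 1) + M (1, 1, 1) (0, 0, 0)
        + M (1, 1, 1) (1, 1, 1)) * hsq

theorem trace_one_kronecker_Itilde_mul (A : Matrix (Fin 2) (Fin 2) ℂ)
    (N : Matrix (Fin 2 × Fin 2) (Fin 2 × Fin 2) ℂ) :
    (((1 : Matrix (Fin 2) (Fin 2) ℂ) ⊗ₖ Itilde) * (A ⊗ₖ N)).trace =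
      A.trace * (N (0, 0) (0, 0) + N (1, 1) (1, 1)) := by
  rw [← mul_kronecker_mul, one_mul, trace_kronecker]
  simp [Itilde, trace, Fintype.sum_prod_type, Fin.sum_univ_two]

theorem trace_rhoGHZ_mul_kronecker (p : ℝ) (A B C : Matrix (Fin 2) (Fin 2) ℂ) :
    (rhoGHZ p * (A ⊗ₖ (B ⊗ₖ C))).trace =
      p / 2 * (A 0 0 * B 0 0 * C 0 0 + A 0 1 * B 0 1 * C 0 1 + A 1 0 * B 1 0 * C 1 0
        + A 1 1 * B 1 1 * C 1 1)
      + (1 - p) / 4 * (A.trace * (B 0 0 * C 0 0 + B 1 1 * C 1 1)) := by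
  rw [rhoGHZ, add_mul, trace_add, smul_mul, smul_mul,
    trace_smul, trace_smul, trace_ghzProj_mul, trace_one_kronecker_Itilde_mul]
  simp only [kroneckerMap_apply, smul_eq_mul]
  push_cast
  ring

theorem filt_zero (l : ℝ) : filt l 0 = !![0, (l : ℂ); (l : ℂ), 0] := by
  ext i j; fin_cases i <;> fin_cases j <;> simp [filt, pauli]

theorem filt_one (l : ℝ) : filt l 1 = !![0, -(l * Complex.I); (l : ℂ) * Complex.I, 0] := by
  ext i j; fin_cases i <;> fin_cases j <;> simp [filt, pauli, mul_comm]

theorem filt_two (l : ℝ) : filt l 2 = !![(l : ℂ) ^ 2, 0; 0, -1] := by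
  ext i j; fin_cases i <;> fin_cases j <;> simp [filt, pauli, sq]

theorem ghz_filtered_correlations_general (p l m n : ℝ) :
    ((rhoGHZ p * (filt l 0 ⊗ₖ (filt m 0 ⊗ₖ filt n 0))).trace = ((p * l * m * n : ℝ) : ℂ)) ∧
    ((rhoGHZ p * (filt l 0 ⊗ₖ (filt m 1 ⊗ₖ filt n 1))).trace = ((-(p * l * m * n) : ℝ) : ℂ)) ∧
    ((rhoGHZ p * (filt l 1 ⊗ₖ (filt m 0 ⊗ₖ filt n 1))).trace = ((-(p * l * m * n) : ℝ) : ℂ)) ∧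
    ((rhoGHZ p * (filt l 1 ⊗ₖ (filt m 1 ⊗ₖ filt n 0))).trace = ((-(p * l * m * n) : ℝ) : ℂ)) ∧
    ((rhoGHZ p * (filt l 2 ⊗ₖ (filt m 2 ⊗ₖ filt n 2))).trace
      = (((l ^ 2 - 1) * (m ^ 2 * n ^ 2 + 1)) / 4
          + ((l ^ 2 + 1) * (m ^ 2 * n ^ 2 - 1)) / 4 * p : ℝ)) ∧
    ∀ i j k : Fin 3,
      (i, j, k) ≠ ((0, 0, 0) : Fin 3 × Fin 3 × Fin 3) →
      (i, j, k) ≠ ((0, 1, 1) : Fin 3 × Fin 3 × Fin 3) →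
      (i, j, k) ≠ ((1, 0, 1) : Fin 3 × Fin 3 × Fin 3) →
      (i, j, k) ≠ ((1, 1, 0) : Fin 3 × Fin 3 × Fin 3) →
      (i, j, k) ≠ ((2, 2, 2) : Fin 3 × Fin 3 × Fin 3) →
      (rhoGHZ p * (filt l i ⊗ₖ (filt m j ⊗ₖ filt n k))).trace = 0 := by
  simp only [trace_rhoGHZ_mul_kronecker]
  refine ⟨?_, ?_, ?_, ?_, ?_, ?_⟩
  · simp [filt_zero]; ring
  · simp [filt_zero, filt_one]; linear_combination (p * l * m * n : ℂ) * Complex.I_sq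
  · simp [filt_zero, filt_one]; linear_combination (p * l * m * n : ℂ) * Complex.I_sq
  · simp [filt_zero, filt_one]; linear_combination (p * l * m * n : ℂ) * Complex.I_sq
  · simp [filt_two, trace_fin_two]; ring
  · intro i j k h₁ h₂ h₃ h₄ h₅
    fin_cases i <;> fin_cases j <;> fin_cases k <;>
      simp_all [filt_zero, filt_one, filt_two, trace_fin_two]

/-- The filtered correlation coefficients D_{ijk} = Tr[ρ_GHZ (α_i⊗β_j⊗γ_k)]:
D_{111} = plmn, D_{122} = D_{212} = D_{221} = -plmn,
D_{333} = ((l²-1)(m²n²+1))/4 + ((l²+1)(m²n²-1))/4·p, all others vanish. -/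
theorem ghz_filtered_correlations (p l m n : ℝ) (hp0 : 0 ≤ p) (hp1 : p ≤ 1)
    (hl : 0 ≤ l) (hm : 0 ≤ m) (hn : 0 ≤ n) :
    ((rhoGHZ p * (filt l 0 ⊗ₖ (filt m 0 ⊗ₖ filt n 0))).trace = ((p * l * m * n : ℝ) : ℂ)) ∧
    ((rhoGHZ p * (filt l 0 ⊗ₖ (filt m 1 ⊗ₖ filt n 1))).trace = ((-(p * l * m * n) : ℝ) : ℂ)) ∧
    ((rhoGHZ p * (filt l 1 ⊗ₖ (filt m 0 ⊗ₖ filt n 1))).trace = ((-(p * l * m * n) : ℝ) : ℂ)) ∧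
    ((rhoGHZ p * (filt l 1 ⊗ₖ (filt m 1 ⊗ₖ filt n 0))).trace = ((-(p * l * m * n) : ℝ) : ℂ)) ∧
    ((rhoGHZ p * (filt l 2 ⊗ₖ (filt m 2 ⊗ₖ filt n 2))).trace
      = (((l ^ 2 - 1) * (m ^ 2 * n ^ 2 + 1)) / 4
          + ((l ^ 2 + 1) * (m ^ 2 * n ^ 2 - 1)) / 4 * p : ℝ)) ∧
    ∀ i j k : Fin 3,
      (i, j, k) ≠ ((0, 0, 0) : Fin 3 × Fin 3 × Fin 3) →
      (i, j, k) ≠ ((0, 1, 1) : Fin 3 × Fin 3 × Fin 3) →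
      (i, j, k) ≠ ((1, 0, 1) : Fin 3 × Fin 3 × Fin 3) →
      (i, j, k) ≠ ((1, 1, 0) : Fin 3 × Fin 3 × Fin 3) →
      (i, j, k) ≠ ((2, 2, 2) : Fin 3 × Fin 3 × Fin 3) →
      (rhoGHZ p * (filt l i ⊗ₖ (filt m j ⊗ₖ filt n k))).trace = 0 :=
  ghz_filtered_correlations_general p l m n
end

section
/- For √2/2 < p ≤ 1 (p real), the largest singular value λ_max of the 3×9 correlation matrix C of ρ_GHZ (with entries C_{111}=p, C_{122}=C_{212}=C_{221}=−p, others zero) satisfies 2√2 λ_max = 4p > 2, i.e., the Mermin inequality bound is violated; conversely, 2√2 λ_max ≤ 2 when 0 ≤ p ≤ 1/2. -/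
/-! `C Cᵀ = diag(2p², 2p², 0)`, so the largest eigenvalue of `C Cᵀ` is `λ² = 2p²`, i.e.
`λ = √2 p` for `p ≥ 0` and `2√2 λ = 4p`; the two claims are then the bounds
`4p > 2√2 > 2` and `4p ≤ 2`. -/

open Matrix

noncomputable def CGHZ (p : ℝ) : Matrix (Fin 3) (Fin 3 × Fin 3) ℝ := fun j ik =>
  if j = 0 ∧ ik = ((0, 0) : Fin 3 × Fin 3) then p
  else if j = 1 ∧ ik = ((0, 1) : Fin 3 × Fin 3) then -p
  else if j = 0 ∧ ik = ((1, 1) : Fin 3 × Fin 3) then -p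
  else if j = 1 ∧ ik = ((1, 0) : Fin 3 × Fin 3) then -p
  else 0

theorem Matrix.exists_mulVec_diagonal_eq_smul_iff {n R : Type*} [Fintype n] [DecidableEq n]
    [CommRing R] [NoZeroDivisors R] [Nontrivial R] (d : n → R) (μ : R) :
    (∃ v : n → R, v ≠ 0 ∧ diagonal d *ᵥ v = μ • v) ↔ ∃ i, d i = μ := by
  constructor
  · rintro ⟨v, hv, hev⟩
    obtain ⟨i, hvi⟩ := Function.ne_iff.mp hv
    have hi := congrFun hev i
    rw [mulVec_diagonal, Pi.smul_apply, smul_eq_mul] at hi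
    exact ⟨i, mul_right_cancel₀ hvi hi⟩
  · rintro ⟨i, rfl⟩
    refine ⟨Pi.single i 1, by simp, ?_⟩
    ext j
    rw [mulVec_diagonal, Pi.smul_apply, smul_eq_mul]
    rcases eq_or_ne j i with rfl | hj
    · simp
    · simp [hj]

theorem CGHZ_mul_transpose (p : ℝ) :
    CGHZ p * (CGHZ p)ᵀ = diagonal ![2 * p ^ 2, 2 * p ^ 2, 0] := by
  ext i j
  fin_cases i <;> fin_cases j <;>
    simp [CGHZ, mul_apply, Fintype.sum_prod_type, Fin.sum_univ_succ, diagonal] <;> ring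

theorem isGreatest_eigenvalues_CGHZ_mul_transpose (p : ℝ) :
    IsGreatest {μ | ∃ v : Fin 3 → ℝ, v ≠ 0 ∧ (CGHZ p * (CGHZ p)ᵀ) *ᵥ v = μ • v}
      (2 * p ^ 2) := by
  simp only [CGHZ_mul_transpose, exists_mulVec_diagonal_eq_smul_iff]
  refine ⟨⟨0, rfl⟩, ?_⟩
  rintro μ ⟨i, rfl⟩
  fin_cases i <;> simp [sq_nonneg]

/-- If λ is the largest singular value of the GHZ correlation matrix (i.e. λ ≥ 0 and λ² is
the largest eigenvalue of C Cᵀ), then for √2/2 < p ≤ 1 one has 2√2·λ = 4p > 2, while for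
0 ≤ p ≤ 1/2 one has 2√2·λ ≤ 2. -/
theorem ghz_mermin_violation (p : ℝ) (lam : ℝ) (hlam0 : 0 ≤ lam)
    (heig : ∃ v : Fin 3 → ℝ, v ≠ 0 ∧ (CGHZ p * (CGHZ p)ᵀ) *ᵥ v = lam ^ 2 • v)
    (hmax : ∀ μ : ℝ, (∃ v : Fin 3 → ℝ, v ≠ 0 ∧ (CGHZ p * (CGHZ p)ᵀ) *ᵥ v = μ • v) →
      μ ≤ lam ^ 2) :
    (Real.sqrt 2 / 2 < p → p ≤ 1 →
      2 * Real.sqrt 2 * lam = 4 * p ∧ 2 * Real.sqrt 2 * lam > 2) ∧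
    (0 ≤ p → p ≤ 1 / 2 → 2 * Real.sqrt 2 * lam ≤ 2) := by
  have hsqrt2 : Real.sqrt 2 * Real.sqrt 2 = 2 := Real.mul_self_sqrt zero_le_two
  have hmermin (hp : 0 ≤ p) : 2 * Real.sqrt 2 * lam = 4 * p := by
    have hlam : lam = Real.sqrt 2 * p := by
      refine (pow_left_inj₀ hlam0 (by positivity) two_ne_zero).mp ?_
      rw [← (isGreatest_eigenvalues_CGHZ_mul_transpose p).unique ⟨heig, hmax⟩, mul_pow,
        Real.sq_sqrt zero_le_two]
    rw [hlam]
    linear_combination 2 * p * hsqrt2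
  refine ⟨fun hp _ => ?_, fun hp hp2 => by linarith [hmermin hp]⟩
  have h := hmermin (le_trans (by positivity) hp.le)
  exact ⟨h, by nlinarith [Real.one_lt_sqrt_two]⟩
end

section
/- Let ρ_G = |GHZ⟩⟨GHZ| with |GHZ⟩ = (|000⟩+|111⟩)/√2, and let E_AD(σ) = E_0 σ E_0† + E_1 σ E_1† with E_0 = diag(1, √(1−γ)), E_1 = !![0, √γ; 0, 0], 0 < γ < 1, applied to each qubit. Then the resulting state ρ_G^{AD} has correlation coefficients C_{111} = (1−γ)^{3/2}, C_{122} = C_{212} = C_{221} = −(1−γ)^{3/2}, C_{333} = γ(3−6γ+4γ²), and all other C_{ijk} = 0. -/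
open Matrix Kronecker ComplexOrder

/-- Kraus operators of the amplitude damping channel with damping rate γ. -/
noncomputable def kraus (γ : ℝ) : Fin 2 → Matrix (Fin 2) (Fin 2) ℂ
  | 0 => !![1, 0; 0, (Real.sqrt (1 - γ) : ℝ)]
  | 1 => !![0, (Real.sqrt γ : ℝ); 0, 0]

/-- The qubit-wise amplitude damped GHZ state
ρ_G^{AD} = Σ_{a,b,c} (E_a⊗E_b⊗E_c) ρ_G (E_a⊗E_b⊗E_c)†. -/
noncomputable def rhoAD (γ : ℝ) : Matrix (Fin 2 × Fin 2 × Fin 2) (Fin 2 × Fin 2 × Fin 2) ℂ :=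
  ∑ a : Fin 2, ∑ b : Fin 2, ∑ c : Fin 2,
    (kraus γ a ⊗ₖ (kraus γ b ⊗ₖ kraus γ c)) * ghzProj *
      (kraus γ a ⊗ₖ (kraus γ b ⊗ₖ kraus γ c))ᴴ

/-! The damped state is the image of `ρ_G = ½ ∑_{a,b} |aaa⟩⟨bbb|` under `Λ ⊗ Λ ⊗ Λ`, and a Kraus map
whose Kraus operators are Kronecker products is the Kronecker product of the Kraus maps. The
single-qubit channel `Λ` fixes `|0⟩⟨0|`, scales the coherences `|0⟩⟨1|`, `|1⟩⟨0|` by `√(1-γ)` and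
sends `|1⟩⟨1|` to `γ|0⟩⟨0| + (1-γ)|1⟩⟨1|`. Since the trace against `σ_i ⊗ σ_j ⊗ σ_k` factorises,
each `C_ijk` is half a sum of four products of entries of the Pauli matrices. -/

theorem sum_kronecker_sum {α ι κ l m n p : Type*} [NonUnitalNonAssocSemiring α]
    [Fintype ι] [Fintype κ] (A : ι → Matrix l m α) (B : κ → Matrix n p α) :
    (∑ i, A i) ⊗ₖ (∑ j, B j) = ∑ q : ι × κ, A q.1 ⊗ₖ B q.2 := by
  ext
  simp only [kroneckerMap_apply, Matrix.sum_apply, Finset.sum_mul_sum, Fintype.sum_prod_type]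

theorem trace_kronecker_mul_kronecker {α l m n p : Type*} [CommSemiring α]
    [Fintype l] [Fintype m] [Fintype n] [Fintype p]
    (A : Matrix l m α) (X : Matrix m l α) (B : Matrix n p α) (Y : Matrix p n α) :
    (A ⊗ₖ B * (X ⊗ₖ Y)).trace = (A * X).trace * (B * Y).trace := by
  rw [← mul_kronecker_mul, trace_kronecker]

section KrausMap

variable {R n m ι κ : Type*} [CommSemiring R] [StarRing R]
  [Fintype n] [Fintype m] [Fintype ι] [Fintype κ]

def krausMap (K : ι → Matrix n n R) : Matrix n n R →ₗ[R] Matrix n n R :=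
  ∑ i, LinearMap.mulLeft R (K i) ∘ₗ LinearMap.mulRight R (K i)ᴴ

theorem krausMap_apply (K : ι → Matrix n n R) (ρ : Matrix n n R) :
    krausMap K ρ = ∑ i, K i * ρ * (K i)ᴴ := by
  simp [krausMap, LinearMap.sum_apply, mul_assoc]

def krausKronecker (K : ι → Matrix n n R) (L : κ → Matrix m m R) :
    ι × κ → Matrix (n × m) (n × m) R :=
  fun p => K p.1 ⊗ₖ L p.2

theorem krausMap_kronecker (K : ι → Matrix n n R) (L : κ → Matrix m m R)
    (A : Matrix n n R) (B : Matrix m m R) :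
    krausMap (krausKronecker K L) (A ⊗ₖ B) = krausMap K A ⊗ₖ krausMap L B := by
  simp only [krausMap_apply, krausKronecker, conjTranspose_kronecker, ← mul_kronecker_mul,
    sum_kronecker_sum]

end KrausMap

theorem rhoAD_eq_krausMap (γ : ℝ) :
    rhoAD γ =
      krausMap (krausKronecker (kraus γ) (krausKronecker (kraus γ) (kraus γ))) ghzProj := by
  simp only [rhoAD, krausMap_apply, krausKronecker, Fintype.sum_prod_type]

theorem ghzProj_eq_sum :
    ghzProj = (2 : ℂ)⁻¹ • ∑ p : Fin 2 × Fin 2,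
      single p.1 p.2 1 ⊗ₖ (single p.1 p.2 1 ⊗ₖ single p.1 p.2 (1 : ℂ)) := by
  have h : ((√2 : ℝ) : ℂ)⁻¹ * ((√2 : ℝ) : ℂ)⁻¹ = (2 : ℂ)⁻¹ := by
    rw [← mul_inv, ← Complex.ofReal_mul, Real.mul_self_sqrt zero_le_two]; norm_num
  ext ⟨a, b, c⟩ ⟨d, e, f⟩
  fin_cases a <;> fin_cases b <;> fin_cases c <;> fin_cases d <;> fin_cases e <;> fin_cases f <;>
    simp [ghzProj, ghzVec, single_kronecker_single, Fintype.sum_prod_type, h]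

section AmplitudeDamping

variable {γ : ℝ}

theorem krausMap_kraus_single_zero_zero :
    krausMap (kraus γ) (single 0 0 1) = single 0 0 1 := by
  ext i j
  fin_cases i <;> fin_cases j <;>
    simp only [krausMap_apply, Matrix.sum_apply, mul_apply, Fin.sum_univ_two] <;> simp [kraus]

theorem krausMap_kraus_single_zero_one :
    krausMap (kraus γ) (single 0 1 1) = ((√(1 - γ) : ℝ) : ℂ) • single 0 1 1 := by
  ext i j
  fin_cases i <;> fin_cases j <;>
    simp only [krausMap_apply, Matrix.sum_apply, mul_apply, Fin.sum_univ_two] <;> simp [kraus]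

theorem krausMap_kraus_single_one_zero :
    krausMap (kraus γ) (single 1 0 1) = ((√(1 - γ) : ℝ) : ℂ) • single 1 0 1 := by
  ext i j
  fin_cases i <;> fin_cases j <;>
    simp only [krausMap_apply, Matrix.sum_apply, mul_apply, Fin.sum_univ_two] <;> simp [kraus]

theorem krausMap_kraus_single_one_one (h0 : 0 ≤ γ) (h1 : γ ≤ 1) :
    krausMap (kraus γ) (single 1 1 1) =
      (γ : ℂ) • single 0 0 1 + (1 - (γ : ℂ)) • single 1 1 1 := by
  have hγ : ((√γ : ℝ) : ℂ) * ((√γ : ℝ) : ℂ) = γ := by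
    rw [← Complex.ofReal_mul, Real.mul_self_sqrt h0]
  have hγ' : ((√(1 - γ) : ℝ) : ℂ) * ((√(1 - γ) : ℝ) : ℂ) = 1 - γ := by
    rw [← Complex.ofReal_mul, Real.mul_self_sqrt (sub_nonneg.2 h1), Complex.ofReal_sub,
      Complex.ofReal_one]
  ext i j
  fin_cases i <;> fin_cases j <;>
    simp only [krausMap_apply, Matrix.sum_apply, mul_apply, Fin.sum_univ_two] <;>
    simp [kraus, hγ, hγ']

end AmplitudeDamping

theorem trace_rhoAD_mul_kronecker {γ : ℝ} (h0 : 0 ≤ γ) (h1 : γ ≤ 1)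
    (X Y Z : Matrix (Fin 2) (Fin 2) ℂ) :
    (rhoAD γ * (X ⊗ₖ (Y ⊗ₖ Z))).trace = (2 : ℂ)⁻¹ *
      (X 0 0 * Y 0 0 * Z 0 0
        + ((√(1 - γ) : ℝ) : ℂ) ^ 3 * (X 1 0 * Y 1 0 * Z 1 0 + X 0 1 * Y 0 1 * Z 0 1)
        + (γ * X 0 0 + (1 - γ) * X 1 1) * (γ * Y 0 0 + (1 - γ) * Y 1 1)
          * (γ * Z 0 0 + (1 - γ) * Z 1 1)) := by
  rw [rhoAD_eq_krausMap, ghzProj_eq_sum, map_smul, map_sum]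
  simp only [krausMap_kronecker, smul_mul, trace_smul, trace_kronecker_mul_kronecker,
    Fintype.sum_prod_type, Fin.sum_univ_two, krausMap_kraus_single_zero_zero,
    krausMap_kraus_single_zero_one, krausMap_kraus_single_one_zero,
    krausMap_kraus_single_one_one h0 h1, add_mul, trace_add, trace_single_mul, smul_eq_mul]
  ring

/-- Correlation coefficients of the amplitude damped GHZ state:
C_{111} = (1-γ)^{3/2}, C_{122} = C_{212} = C_{221} = -(1-γ)^{3/2},
C_{333} = γ(3-6γ+4γ²), all others vanish. -/
theorem ad_ghz_correlations (γ : ℝ) (h0 : 0 < γ) (h1 : γ < 1) :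
    ((rhoAD γ * (pauli 0 ⊗ₖ (pauli 0 ⊗ₖ pauli 0))).trace
      = (((1 - γ) ^ ((3 : ℝ) / 2) : ℝ) : ℂ)) ∧
    ((rhoAD γ * (pauli 0 ⊗ₖ (pauli 1 ⊗ₖ pauli 1))).trace
      = ((-((1 - γ) ^ ((3 : ℝ) / 2)) : ℝ) : ℂ)) ∧
    ((rhoAD γ * (pauli 1 ⊗ₖ (pauli 0 ⊗ₖ pauli 1))).trace
      = ((-((1 - γ) ^ ((3 : ℝ) / 2)) : ℝ) : ℂ)) ∧
    ((rhoAD γ * (pauli 1 ⊗ₖ (pauli 1 ⊗ₖ pauli 0))).trace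
      = ((-((1 - γ) ^ ((3 : ℝ) / 2)) : ℝ) : ℂ)) ∧
    ((rhoAD γ * (pauli 2 ⊗ₖ (pauli 2 ⊗ₖ pauli 2))).trace
      = ((γ * (3 - 6 * γ + 4 * γ ^ 2) : ℝ) : ℂ)) ∧
    ∀ i j k : Fin 3,
      (i, j, k) ≠ ((0, 0, 0) : Fin 3 × Fin 3 × Fin 3) →
      (i, j, k) ≠ ((0, 1, 1) : Fin 3 × Fin 3 × Fin 3) →
      (i, j, k) ≠ ((1, 0, 1) : Fin 3 × Fin 3 × Fin 3) →
      (i, j, k) ≠ ((1, 1, 0) : Fin 3 × Fin 3 × Fin 3) →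
      (i, j, k) ≠ ((2, 2, 2) : Fin 3 × Fin 3 × Fin 3) →
      (rhoAD γ * (pauli i ⊗ₖ (pauli j ⊗ₖ pauli k))).trace = 0 := by
  have hpow : (((1 - γ) ^ ((3 : ℝ) / 2) : ℝ) : ℂ) = ((√(1 - γ) : ℝ) : ℂ) ^ 3 := by
    rw [Real.rpow_div_two_eq_sqrt _ (sub_nonneg.2 h1.le)]
    norm_cast
  simp only [trace_rhoAD_mul_kronecker h0.le h1.le]
  refine ⟨?_, ?_, ?_, ?_, ?_, ?_⟩
  · simp [pauli, hpow]; ring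
  · simp [pauli, hpow]; ring
  · simp [pauli, hpow]; ring
  · simp [pauli, hpow]; ring
  · simp [pauli]; ring
  · intro i j k
    fin_cases i <;> fin_cases j <;> fin_cases k <;> simp [pauli]
end
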